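/- arXiv:0907.2470 — 2 statements merged into one kernel-verified Lean document; each statement's English description precedes it below -/
import Mathlib

section
/- If α, β ∈ X are Lipschitz with Lipschitz constant m (i.e. |α(s) − α(t)| ≤ m|s − t| and |β(s) − β(t)| ≤ m|s − t| for all s, t ∈ I), then α # β is Lipschitz with Lipschitz constant m². -/
open scoped BigOperators

noncomputable section

attribute [local instance] Classical.propDecidable

/-- `I`: the set of dyadic rationals in `[0,1]`. -/
def dyadicI : Set ℚ := {t | 0 ≤ t ∧ t ≤ 1 ∧ ∃ i n : ℕ, t = (i : ℚ) / 2 ^ n}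

/-- `X` is the ℚ-vector space of functions `I → ℚ`. -/
abbrev X : Type := dyadicI → ℚ

lemma dyadicI_mem {i n : ℕ} (h : i ≤ 2 ^ n) : (i : ℚ) / 2 ^ n ∈ dyadicI := by
  refine ⟨by positivity, ?_, i, n, rfl⟩
  rw [div_le_one (by positivity)]
  exact_mod_cast h

lemma zero_mem_dyadicI : (0 : ℚ) ∈ dyadicI := by
  simpa using dyadicI_mem (i := 0) (n := 0) (by norm_num)

lemma one_mem_dyadicI : (1 : ℚ) ∈ dyadicI := by
  simpa using dyadicI_mem (i := 1) (n := 0) (by norm_num)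

lemma half_mem_dyadicI : (1 / 2 : ℚ) ∈ dyadicI := by
  have := dyadicI_mem (i := 1) (n := 1) (by norm_num)
  norm_num at this ⊢
  exact this

/-- Evaluation of `α : X` at a rational, extended by `0` off `I`. -/
def evI (α : X) (t : ℚ) : ℚ := if h : t ∈ dyadicI then α ⟨t, h⟩ else 0

/-- The map `T₀ : X → X`, `(T₀ α)(t) = α (t/2)`. -/
def T0 (α : X) : X := fun t => evI α (t.1 / 2)

/-- The map `T₁ : X → X`, `(T₁ α)(t) = α ((1+t)/2)`. -/
def T1 (α : X) : X := fun t => evI α ((1 + t.1) / 2)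

/-- Auxiliary recursion (on the exponent of the denominator) defining `α # β`. -/
def hashAux : ℕ → X → X → ℚ → ℚ
  | 0, α, β, t =>
      if t = 0 then 0 else (evI α 1 - evI α 0) * (evI β 1 - evI β 0)
  | n + 1, α, β, t =>
      if t ≤ 1 / 2 then
        hashAux n (T0 α) (T0 β) (2 * t) + hashAux n (T1 α) (T1 β) (2 * t)
      else
        hashAux n (T0 α) (T0 β) 1 + hashAux n (T1 α) (T1 β) 1 +
          hashAux n (T0 α) (T1 β) (2 * t - 1) + hashAux n (T1 α) (T0 β) (2 * t - 1)

/-- The product `α # β` on `X`. -/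
def hash (α β : X) : X := fun t => hashAux (padicValNat 2 t.1.den) α β t.1

/-- The element `t ↦ t` of `X`. -/
def tId : X := fun t => t.1

/-- The element `ε : t ↦ t − t²` of `X`. -/
def epsX : X := fun t => t.1 - t.1 ^ 2

/-- The constant function `1` in `X`. -/
def oneX : X := fun _ => (1 : ℚ)

/-- Convexity: `2α(i/q) ≥ α((i−1)/q) + α((i+1)/q)` for all powers of two `q = 2^n`, `0 < i < q`. -/
def ConvexX (α : X) : Prop :=
  ∀ n i : ℕ, 0 < i → i < 2 ^ n →
    evI α (((i : ℚ) - 1) / 2 ^ n) + evI α (((i : ℚ) + 1) / 2 ^ n)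
      ≤ 2 * evI α ((i : ℚ) / 2 ^ n)

/-- `α` is Lipschitz with constant `m`. -/
def LipschitzQ (m : ℚ) (α : X) : Prop :=
  ∀ s t : dyadicI, |α s - α t| ≤ m * |s.1 - t.1|

/-- The point `2^{-n}` of `I`. -/
def invPow (n : ℕ) : dyadicI :=
  ⟨1 / 2 ^ n, by simpa using dyadicI_mem (i := 1) (n := n) Nat.one_le_two_pow⟩

/-- `μ` is the Hilbert–Kunz multiplicity of `α`, i.e. `μ = lim 2^n α(2^{-n})`. -/
def IsHKmu (α : X) (μ : ℝ) : Prop :=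
  Filter.Tendsto (fun n : ℕ => ((2 ^ n * α (invPow n) : ℚ) : ℝ)) Filter.atTop (nhds μ)

/-- The series `S_α = Σ α(2^{-n}) (2w)^n = Σ (2^n α(2^{-n})) w^n`. -/
def hkSeries (α : X) : PowerSeries ℚ := PowerSeries.mk fun n => 2 ^ n * α (invPow n)

/-- Auxiliary recursion defining the functions `φ_m`. -/
def phiAux : ℕ → ℕ → ℚ → ℚ
  | 0, _, _ => 0
  | n + 1, m, t =>
      if t ≤ 1 / 2 then
        if m % 2 = 0 then (phiAux n (m + 1) (2 * t) + (8 * (m : ℚ) + 6) * t) / 8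
        else (phiAux n (m - 1) (2 * t) + ((2 * t) - (2 * t) ^ 2) + (8 * (m : ℚ) + 6) * t) / 8
      else
        if m = 0 then (phiAux n 0 (2 * t - 1) + 6 * (1 - t)) / 8
        else if m % 2 = 0 then
          (phiAux n (m - 1) (2 * t - 1) + ((2 * t - 1) - (2 * t - 1) ^ 2)
            + (8 * (m : ℚ) + 6) * (1 - t)) / 8
        else (phiAux n (m + 1) (2 * t - 1) + (8 * (m : ℚ) + 6) * (1 - t)) / 8

/-- The functions `φ_m ∈ X` of Definition 2.2. -/
def phiM (m : ℕ) : X := fun t => phiAux (padicValNat 2 t.1.den) m t.1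

/-- `ℕ` with the Nim-sum (bitwise XOR) as its (commutative) monoid operation. -/
def NimNat : Type := ℕ

instance : CommMonoid NimNat where
  mul a b := Nat.xor a b
  one := (0 : ℕ)
  mul_assoc := Nat.xor_assoc
  mul_comm := Nat.xor_comm
  one_mul := Nat.zero_xor
  mul_one := Nat.xor_zero

/-- The ring `Γ`: free `ℤ`-module on `λ₀, λ₁, …` with `λᵢλⱼ = λ_{i XOR j}`. -/
abbrev GammaZ : Type := MonoidAlgebra ℤ NimNat

/-- The ring `Γ_Q = Γ ⊗ ℚ`. -/
abbrev GammaQ : Type := MonoidAlgebra ℚ NimNat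

/-- The basis element `λᵢ` of `Γ`. -/
def lamZ (i : ℕ) : GammaZ := MonoidAlgebra.single (show NimNat from i) 1

/-- The basis element `λᵢ` of `Γ_Q`. -/
def lamQ (i : ℕ) : GammaQ := MonoidAlgebra.single (show NimNat from i) 1

/-- `δ_r = λ₀ − λ₁ + ⋯ + (−1)^{r−1} λ_{r−1}` in `Γ`. -/
def deltaZ (r : ℕ) : GammaZ := ∑ i ∈ Finset.range r, ((-1 : ℤ) ^ i) • lamZ i

/-- `δ_r` in `Γ_Q`. -/
def deltaQ (r : ℕ) : GammaQ := ∑ i ∈ Finset.range r, ((-1 : ℚ) ^ i) • lamQ i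

/-- `L_n(α) = Σ_{i=0}^{2^n−1} (α((i+1)/2^n) − α(i/2^n)) (−1)^i λᵢ ∈ Γ_Q`. -/
def Ln (n : ℕ) (α : X) : GammaQ :=
  ∑ i ∈ Finset.range (2 ^ n),
    ((-1 : ℚ) ^ i * (evI α (((i : ℚ) + 1) / 2 ^ n) - evI α ((i : ℚ) / 2 ^ n))) • lamQ i

/-- The Hilbert–Kunz function `φ_f ∈ X` of a power series `f`:
`φ_f(i/q) = q^{-r} · dim_F F[[u₁,…,u_r]]/(u₁^q,…,u_r^q,f^i)`. -/
def phiF {F : Type} [Field F] {σ : Type} (f : MvPowerSeries σ F) : X := fun t =>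
  ((Module.finrank F
      (MvPowerSeries σ F ⧸ Ideal.span
        (Set.range (fun j : σ => (MvPowerSeries.X j : MvPowerSeries σ F) ^ t.1.den)
          ∪ {f ^ t.1.num.toNat}))) : ℚ)
    / (t.1.den : ℚ) ^ (Nat.card σ)

/-- The natural inclusion `F[[u_j : j ∈ σ]] → F[[u_j : j ∈ τ]]` along an injection `e : σ → τ`. -/
def embPS {F : Type} [Field F] {σ τ : Type} (e : σ → τ) (f : MvPowerSeries σ F) :
    MvPowerSeries τ F := fun d =>
  if h : ∃ d' : σ →₀ ℕ, Finsupp.mapDomain e d' = d then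
    MvPowerSeries.coeff h.choose f
  else 0

/-!
Induct on the dyadic level `n` of the recursion. Since `T₀` and `T₁` halve Lipschitz constants,
each of the two terms of the recursion on either half of `[0,1]` is `(m/2)²`-Lipschitz in a
variable moving twice as fast, so the sum is `m²`-Lipschitz on each half; the two halves glue at
`1/2`. The recursion gives the same value at every level deep enough for the point, because the
level-`0` expression `(α(1) − α(0))(β(1) − β(0))` is additive over the split of `[0,1]` at `1/2`.
-/

def OnGrid (n : ℕ) (s : ℚ) : Prop := ∃ i : ℕ, i ≤ 2 ^ n ∧ s = (i : ℚ) / 2 ^ n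

lemma onGrid_zero (n : ℕ) : OnGrid n 0 := ⟨0, Nat.zero_le _, by simp⟩

lemma onGrid_one (n : ℕ) : OnGrid n 1 := ⟨2 ^ n, le_rfl, by push_cast; field_simp⟩

lemma onGrid_half (n : ℕ) : OnGrid (n + 1) (1 / 2) :=
  ⟨2 ^ n, Nat.pow_le_pow_right two_pos n.le_succ, by push_cast; rw [pow_succ]; field_simp⟩

lemma onGrid_zero_iff {s : ℚ} : OnGrid 0 s ↔ s = 0 ∨ s = 1 := by
  constructor
  · rintro ⟨i, hi, rfl⟩
    interval_cases i <;> simp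
  · rintro (rfl | rfl)
    exacts [onGrid_zero 0, onGrid_one 0]

lemma OnGrid.mono {k n : ℕ} (h : k ≤ n) {s : ℚ} (hs : OnGrid k s) : OnGrid n s := by
  obtain ⟨i, hi, rfl⟩ := hs
  obtain ⟨d, rfl⟩ := Nat.exists_eq_add_of_le h
  refine ⟨i * 2 ^ d, ?_, ?_⟩
  · rw [pow_add]; exact Nat.mul_le_mul_right _ hi
  · push_cast; rw [pow_add]; field_simp

lemma OnGrid.two_mul {n : ℕ} {s : ℚ} (h : OnGrid (n + 1) s) (hs : s ≤ 1 / 2) :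
    OnGrid n (2 * s) := by
  obtain ⟨i, -, rfl⟩ := h
  have hi : (i : ℚ) ≤ 2 ^ n := by
    rw [div_le_div_iff₀ (by positivity) two_pos, pow_succ] at hs
    linarith
  refine ⟨i, by exact_mod_cast hi, ?_⟩
  rw [pow_succ]; field_simp

lemma OnGrid.two_mul_sub_one {n : ℕ} {s : ℚ} (h : OnGrid (n + 1) s) (hs : 1 / 2 ≤ s) :
    OnGrid n (2 * s - 1) := by
  obtain ⟨i, hi, rfl⟩ := h
  have hi' : (2 : ℚ) ^ n ≤ i := by
    rw [div_le_div_iff₀ two_pos (by positivity), pow_succ] at hs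
    linarith
  have hin : 2 ^ n ≤ i := by exact_mod_cast hi'
  rw [pow_succ] at hi
  refine ⟨i - 2 ^ n, by omega, ?_⟩
  push_cast [hin]
  rw [pow_succ]; field_simp

lemma onGrid_padicValNat_den (u : dyadicI) : OnGrid (padicValNat 2 u.1.den) u.1 := by
  obtain ⟨h0, h1, i, n, hu⟩ := u.2
  have hden : u.1.den ∣ 2 ^ n := by
    have := Rat.den_dvd (i : ℤ) (2 ^ n : ℤ)
    rw [Rat.divInt_eq_div] at this
    push_cast at this
    rw [← hu] at this
    exact_mod_cast this
  obtain ⟨k, -, hk⟩ := (Nat.dvd_prime_pow Nat.prime_two).mp hden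
  have hnum : 0 ≤ u.1.num := Rat.num_nonneg.mpr h0
  have hnum_le : u.1.num ≤ u.1.den := by
    rw [← Rat.num_div_den u.1, div_le_one (by exact_mod_cast u.1.pos)] at h1
    exact_mod_cast h1
  rw [hk, padicValNat.prime_pow]
  refine ⟨u.1.num.toNat, by omega, ?_⟩
  have hden_cast : (u.1.den : ℚ) = 2 ^ k := by exact_mod_cast hk
  have hnum_cast : ((u.1.num.toNat : ℕ) : ℚ) = u.1.num := by
    exact_mod_cast Int.toNat_of_nonneg hnum
  rw [hnum_cast, ← hden_cast, Rat.num_div_den]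

lemma abs_sub_le_of_split {P : ℚ → Prop} {f : ℚ → ℚ} {L c : ℚ} (hc : P c)
    (hleft : ∀ u v, P u → P v → u ≤ c → v ≤ c → |f u - f v| ≤ L * |u - v|)
    (hright : ∀ u v, P u → P v → c ≤ u → c ≤ v → |f u - f v| ≤ L * |u - v|)
    {s t : ℚ} (hs : P s) (ht : P t) : |f s - f t| ≤ L * |s - t| := by
  wlog hst : s ≤ t generalizing s t
  · rw [abs_sub_comm, abs_sub_comm s]
    exact this ht hs (le_of_not_ge hst)
  rcases le_total t c with htc | hct
  · exact hleft s t hs ht (hst.trans htc) htc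
  rcases le_total c s with hcs | hsc
  · exact hright s t hs ht hcs (hcs.trans hst)
  calc |f s - f t| ≤ |f s - f c| + |f c - f t| := abs_sub_le _ _ _
    _ ≤ L * |s - c| + L * |c - t| :=
        add_le_add (hleft s c hs hc hsc le_rfl) (hright c t hc ht le_rfl hct)
    _ = L * |s - t| := by
        rw [abs_of_nonpos (by linarith), abs_of_nonpos (by linarith),
          abs_of_nonpos (by linarith)]
        ring

lemma abs_add_sub_add_le_two_mul {a a' b b' c : ℚ} (ha : |a - a'| ≤ c) (hb : |b - b'| ≤ c) :
    |a + b - (a' + b')| ≤ 2 * c :=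
  calc |a + b - (a' + b')| = |(a - a') + (b - b')| := by ring_nf
    _ ≤ 2 * c := (abs_add_le _ _).trans (by linarith)

lemma div_two_mem_dyadicI {s : ℚ} (h : s ∈ dyadicI) : s / 2 ∈ dyadicI := by
  obtain ⟨h0, h1, i, n, rfl⟩ := h
  refine ⟨by positivity, by linarith, i, n + 1, ?_⟩
  rw [pow_succ]; field_simp

lemma one_add_div_two_mem_dyadicI {s : ℚ} (h : s ∈ dyadicI) : (1 + s) / 2 ∈ dyadicI := by
  obtain ⟨h0, h1, i, n, rfl⟩ := h
  refine ⟨by positivity, by linarith, 2 ^ n + i, n + 1, ?_⟩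
  push_cast
  rw [pow_succ]; field_simp

lemma evI_of_mem (α : X) {t : ℚ} (ht : t ∈ dyadicI) : evI α t = α ⟨t, ht⟩ := dif_pos ht

lemma evI_T0 (α : X) {s : ℚ} (hs : s ∈ dyadicI) : evI (T0 α) s = evI α (s / 2) :=
  evI_of_mem _ hs

lemma evI_T1 (α : X) {s : ℚ} (hs : s ∈ dyadicI) : evI (T1 α) s = evI α ((1 + s) / 2) :=
  evI_of_mem _ hs

namespace LipschitzQ

variable {m : ℚ} {α : X}

lemma abs_evI_one_sub_evI_zero_le (h : LipschitzQ m α) : |evI α 1 - evI α 0| ≤ m := by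
  rw [evI_of_mem α one_mem_dyadicI, evI_of_mem α zero_mem_dyadicI]
  simpa using h ⟨1, one_mem_dyadicI⟩ ⟨0, zero_mem_dyadicI⟩

lemma T0 (h : LipschitzQ m α) : LipschitzQ (m / 2) (T0 α) := by
  intro s t
  change |evI α (s.1 / 2) - evI α (t.1 / 2)| ≤ _
  rw [evI_of_mem α (div_two_mem_dyadicI s.2), evI_of_mem α (div_two_mem_dyadicI t.2)]
  calc _ ≤ m * |s.1 / 2 - t.1 / 2| := h ⟨_, div_two_mem_dyadicI s.2⟩ ⟨_, div_two_mem_dyadicI t.2⟩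
    _ = m / 2 * |s.1 - t.1| := by rw [← sub_div, abs_div, abs_two]; ring

lemma T1 (h : LipschitzQ m α) : LipschitzQ (m / 2) (T1 α) := by
  intro s t
  change |evI α ((1 + s.1) / 2) - evI α ((1 + t.1) / 2)| ≤ _
  rw [evI_of_mem α (one_add_div_two_mem_dyadicI s.2),
    evI_of_mem α (one_add_div_two_mem_dyadicI t.2)]
  calc _ ≤ m * |(1 + s.1) / 2 - (1 + t.1) / 2| :=
        h ⟨_, one_add_div_two_mem_dyadicI s.2⟩ ⟨_, one_add_div_two_mem_dyadicI t.2⟩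
    _ = m / 2 * |s.1 - t.1| := by rw [← sub_div, add_sub_add_left_eq_sub, abs_div, abs_two]; ring

end LipschitzQ

section hashAux

variable {n : ℕ} {α β : X} {s : ℚ}

lemma hashAux_apply_zero (n : ℕ) (α β : X) : hashAux n α β 0 = 0 := by
  induction n generalizing α β with
  | zero => simp [hashAux]
  | succ n ih => simp [hashAux, ih]

lemma hashAux_zero_apply_one (α β : X) :
    hashAux 0 α β 1 = (evI α 1 - evI α 0) * (evI β 1 - evI β 0) :=
  if_neg one_ne_zero

lemma hashAux_succ_of_le_half (hs : s ≤ 1 / 2) :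
    hashAux (n + 1) α β s =
      hashAux n (T0 α) (T0 β) (2 * s) + hashAux n (T1 α) (T1 β) (2 * s) :=
  if_pos hs

lemma hashAux_succ_of_half_le (hs : 1 / 2 ≤ s) :
    hashAux (n + 1) α β s =
      (hashAux n (T0 α) (T0 β) 1 + hashAux n (T1 α) (T1 β) 1) +
        (hashAux n (T0 α) (T1 β) (2 * s - 1) + hashAux n (T1 α) (T0 β) (2 * s - 1)) := by
  rcases hs.eq_or_lt with rfl | hlt
  · rw [hashAux_succ_of_le_half le_rfl]
    norm_num [hashAux_apply_zero]
  · rw [hashAux, if_neg hlt.not_ge]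
    ring

lemma hashAux_succ_of_onGrid (hs : OnGrid n s) : hashAux (n + 1) α β s = hashAux n α β s := by
  induction n generalizing α β s with
  | zero =>
    rcases onGrid_zero_iff.1 hs with rfl | rfl
    · rw [hashAux_apply_zero, hashAux_apply_zero]
    · rw [hashAux_succ_of_half_le (by norm_num)]
      norm_num only [hashAux_zero_apply_one, evI_T0, evI_T1, zero_mem_dyadicI, one_mem_dyadicI]
      ring
  | succ n ih =>
    rcases le_total s (1 / 2) with hs' | hs'
    · rw [hashAux_succ_of_le_half hs', hashAux_succ_of_le_half hs', ih (hs.two_mul hs'),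
        ih (hs.two_mul hs')]
    · rw [hashAux_succ_of_half_le hs', hashAux_succ_of_half_le hs', ih (onGrid_one n),
        ih (onGrid_one n), ih (hs.two_mul_sub_one hs'), ih (hs.two_mul_sub_one hs')]

lemma hashAux_eq_of_le {k : ℕ} (hkn : k ≤ n) (hs : OnGrid k s) :
    hashAux n α β s = hashAux k α β s := by
  induction n, hkn using Nat.le_induction with
  | base => rfl
  | succ n hkn ih => rw [hashAux_succ_of_onGrid (hs.mono hkn), ih]

lemma hash_eq_hashAux {u : dyadicI} (hu : OnGrid n u.1) : hash α β u = hashAux n α β u.1 :=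
  calc hash α β u = hashAux (max _ n) α β u.1 :=
        (hashAux_eq_of_le (le_max_left _ _) (onGrid_padicValNat_den u)).symm
    _ = hashAux n α β u.1 := hashAux_eq_of_le (le_max_right _ _) hu

end hashAux

lemma abs_hashAux_sub_le {n : ℕ} {m : ℚ} {α β : X} (hα : LipschitzQ m α) (hβ : LipschitzQ m β)
    {s t : ℚ} (hs : OnGrid n s) (ht : OnGrid n t) :
    |hashAux n α β s - hashAux n α β t| ≤ m ^ 2 * |s - t| := by
  induction n generalizing m α β s t with
  | zero =>
    have hprod : |evI α 1 - evI α 0| * |evI β 1 - evI β 0| ≤ m ^ 2 :=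
      sq m ▸ mul_le_mul hα.abs_evI_one_sub_evI_zero_le hβ.abs_evI_one_sub_evI_zero_le
        (abs_nonneg _) ((abs_nonneg _).trans hα.abs_evI_one_sub_evI_zero_le)
    rcases onGrid_zero_iff.1 hs with rfl | rfl <;> rcases onGrid_zero_iff.1 ht with rfl | rfl <;>
      simp [hashAux_apply_zero, hashAux_zero_apply_one, hprod]
  | succ n ih =>
    refine abs_sub_le_of_split (onGrid_half n) (fun u v hu hv hu' hv' => ?_)
      (fun u v hu hv hu' hv' => ?_) hs ht
    · rw [hashAux_succ_of_le_half hu', hashAux_succ_of_le_half hv']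
      calc _ ≤ 2 * ((m / 2) ^ 2 * |2 * u - 2 * v|) :=
            abs_add_sub_add_le_two_mul (ih hα.T0 hβ.T0 (hu.two_mul hu') (hv.two_mul hv'))
              (ih hα.T1 hβ.T1 (hu.two_mul hu') (hv.two_mul hv'))
        _ = m ^ 2 * |u - v| := by rw [← mul_sub, abs_mul, abs_two]; ring
    · rw [hashAux_succ_of_half_le hu', hashAux_succ_of_half_le hv', add_sub_add_left_eq_sub]
      have hu'' := hu.two_mul_sub_one hu'
      have hv'' := hv.two_mul_sub_one hv'
      calc _ ≤ 2 * ((m / 2) ^ 2 * |2 * u - 1 - (2 * v - 1)|) :=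
            abs_add_sub_add_le_two_mul (ih hα.T0 hβ.T1 hu'' hv'') (ih hα.T1 hβ.T0 hu'' hv'')
        _ = m ^ 2 * |u - v| := by rw [sub_sub_sub_cancel_right, ← mul_sub, abs_mul, abs_two]; ring

/-- Theorem 1.10: if `α` and `β` are Lipschitz with constant `m`,
then `α # β` is Lipschitz with constant `m²`. -/
theorem statement4 (m : ℚ) (α β : X)
    (hα : LipschitzQ m α) (hβ : LipschitzQ m β) :
    LipschitzQ (m ^ 2) (hash α β) := by
  intro s t
  set n := max (padicValNat 2 s.1.den) (padicValNat 2 t.1.den)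
  have hs : OnGrid n s.1 := (onGrid_padicValNat_den s).mono (le_max_left _ _)
  have ht : OnGrid n t.1 := (onGrid_padicValNat_den t).mono (le_max_right _ _)
  rw [hash_eq_hashAux hs, hash_eq_hashAux ht]
  exact abs_hashAux_sub_le hα hβ hs ht

end
end

section
/- Let q be a power of 2 and 1 ≤ r, s ≤ q. Then in Γ the product δ_r δ_s is a linear combination of δ₁, …, δ_q with non-negative integer coefficients. Furthermore δ_r δ_q = r·δ_q. -/
open scoped BigOperators

noncomputable section

attribute [local instance] Classical.propDecidable

/-!
Write `q = 2ⁿ`. Nim-translation by `j < q` permutes `[0, q)` and changes parities by that of `j`,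
so `λ_j δ_q = (-1)^j δ_q`; summing gives `δ_r δ_q = r δ_q`.

For the first claim induct on `n`, passing from `q` to `2q`, with `r ≤ s`. Translation by `q`
maps `[0, q)` onto `[q, 2q)`, so `±λ_q δ_i = δ_{q+i} - δ_q`. Hence for `r ≤ q < s = q + b`,
`δ_r δ_s = r δ_q ± λ_q (δ_r δ_b)`, and writing `δ_r δ_b = Σ c_i δ_i` this is
`(r - Σ c_i) δ_q + Σ c_i δ_{q+i}`; here `Σ c_i` is the coefficient of `λ₀` in `δ_r δ_b`, which is
`min r b ≤ r`. For `q < r, s` translation by `2q - 1` reverses `[0, 2q)`, which yields the duality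
`δ_r δ_s = δ_{2q-r} δ_{2q-s} + (r + s - 2q) δ_{2q}` and reduces to the case `r, s ≤ q`.
-/

lemma Nat.two_pow_xor_of_lt {b n : ℕ} (hb : b < 2 ^ n) : 2 ^ n ^^^ b = 2 ^ n + b := by
  rw [← Nat.mul_one (2 ^ n), Nat.two_pow_add_eq_or_of_lt hb, Nat.mul_one]
  apply Nat.eq_of_testBit_eq
  intro i
  rcases eq_or_ne n i with rfl | hi
  · simp [Nat.testBit_lt_two_pow hb]
  · simp [hi]

lemma Nat.two_pow_sub_one_xor_of_lt {i n : ℕ} (hi : i < 2 ^ n) :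
    (2 ^ n - 1) ^^^ i = 2 ^ n - 1 - i := by
  have hnot := BitVec.toNat_not (x := BitVec.ofNat n i)
  have hxor := BitVec.toNat_xor (BitVec.allOnes n) (BitVec.ofNat n i)
  rw [BitVec.allOnes_xor] at hxor
  simp only [BitVec.toNat_ofNat, Nat.mod_eq_of_lt hi, BitVec.toNat_allOnes] at hnot hxor
  omega

lemma neg_one_pow_xor (i j : ℕ) : (-1 : ℤ) ^ (i ^^^ j) = (-1) ^ i * (-1) ^ j := by
  rw [← pow_add, neg_one_pow_eq_pow_mod_two, Nat.xor_mod_two_eq, ← neg_one_pow_eq_pow_mod_two]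

lemma lamZ_mul_lamZ (i j : ℕ) : lamZ i * lamZ j = lamZ (i ^^^ j) := by
  rw [lamZ, lamZ, MonoidAlgebra.single_mul_single, one_mul]
  rfl

lemma neg_one_pow_smul_lamZ_mul_deltaZ (j k : ℕ) :
    (-1 : ℤ) ^ j • (lamZ j * deltaZ k)
      = ∑ i ∈ Finset.range k, (-1 : ℤ) ^ (j ^^^ i) • lamZ (j ^^^ i) := by
  rw [deltaZ, Finset.mul_sum, Finset.smul_sum]
  refine Finset.sum_congr rfl fun i _ => ?_
  rw [mul_smul_comm, lamZ_mul_lamZ, smul_smul, neg_one_pow_xor]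

lemma neg_one_pow_smul_lamZ_mul_deltaZ_two_pow {j n : ℕ} (hj : j < 2 ^ n) :
    (-1 : ℤ) ^ j • (lamZ j * deltaZ (2 ^ n)) = deltaZ (2 ^ n) := by
  rw [neg_one_pow_smul_lamZ_mul_deltaZ, deltaZ]
  have hmem : ∀ i ∈ Finset.range (2 ^ n), j ^^^ i ∈ Finset.range (2 ^ n) := fun i hi =>
    Finset.mem_range.mpr (Nat.xor_lt_two_pow hj (Finset.mem_range.mp hi))
  exact Finset.sum_nbij' (j ^^^ ·) (j ^^^ ·) hmem hmem (fun i _ => xor_cancel_left j i)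
    (fun i _ => xor_cancel_left j i) fun _ _ => rfl

lemma deltaZ_mul_deltaZ_two_pow {n r : ℕ} (hr : r ≤ 2 ^ n) :
    deltaZ r * deltaZ (2 ^ n) = (r : ℤ) • deltaZ (2 ^ n) :=
  calc deltaZ r * deltaZ (2 ^ n) = ∑ _i ∈ Finset.range r, deltaZ (2 ^ n) := by
        rw [deltaZ, Finset.sum_mul]
        refine Finset.sum_congr rfl fun i hi => ?_
        rw [smul_mul_assoc,
          neg_one_pow_smul_lamZ_mul_deltaZ_two_pow ((Finset.mem_range.mp hi).trans_le hr)]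
    _ = (r : ℤ) • deltaZ (2 ^ n) := by rw [Finset.sum_const, Finset.card_range, natCast_zsmul]

lemma neg_one_pow_smul_lamZ_two_pow_mul_deltaZ {n k : ℕ} (hk : k ≤ 2 ^ n) :
    (-1 : ℤ) ^ 2 ^ n • (lamZ (2 ^ n) * deltaZ k) = deltaZ (2 ^ n + k) - deltaZ (2 ^ n) := by
  rw [neg_one_pow_smul_lamZ_mul_deltaZ, deltaZ, deltaZ, Finset.sum_range_add, add_sub_cancel_left]
  refine Finset.sum_congr rfl fun i hi => ?_
  rw [Nat.two_pow_xor_of_lt ((Finset.mem_range.mp hi).trans_le hk)]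

lemma neg_one_pow_smul_lamZ_two_pow_sub_one_mul_deltaZ {n k : ℕ} (hk : k ≤ 2 ^ n) :
    (-1 : ℤ) ^ (2 ^ n - 1) • (lamZ (2 ^ n - 1) * deltaZ k)
      = deltaZ (2 ^ n) - deltaZ (2 ^ n - k) := by
  rw [neg_one_pow_smul_lamZ_mul_deltaZ, deltaZ, deltaZ,
    ← Finset.sum_Ico_eq_sub _ (Nat.sub_le _ _), Finset.sum_Ico_eq_sum_range, Nat.sub_sub_self hk,
    ← Finset.sum_range_reflect]
  refine Finset.sum_congr rfl fun i hi => ?_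
  have hik := Finset.mem_range.mp hi
  rw [Nat.two_pow_sub_one_xor_of_lt (by omega),
    show 2 ^ n - 1 - (k - 1 - i) = 2 ^ n - k + i by omega]

/-- The coefficient of `λ₀`. Every `δ_i` with `i ≥ 1` has coefficient `1`, so on non-negative
combinations of them it counts the summands. -/
def lamZeroCoeff : GammaZ →+ ℤ :=
  (Finsupp.applyAddHom 1).comp MonoidAlgebra.coeffAddEquiv.toAddMonoidHom

lemma lamZeroCoeff_lamZ (k : ℕ) : lamZeroCoeff (lamZ k) = if k = 0 then 1 else 0 := by
  change Finsupp.single (show NimNat from k) (1 : ℤ) 1 = _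
  by_cases hk : k = 0
  · rw [if_pos hk, hk]
    exact Finsupp.single_eq_same
  · rw [if_neg hk]
    exact Finsupp.single_eq_of_ne' hk

lemma lamZeroCoeff_deltaZ {i : ℕ} (hi : 1 ≤ i) : lamZeroCoeff (deltaZ i) = 1 := by
  rw [deltaZ, map_sum, Finset.sum_eq_single_of_mem 0 (Finset.mem_range.mpr hi)]
  · simp [lamZeroCoeff_lamZ]
  · intro j _ hj
    rw [map_zsmul, lamZeroCoeff_lamZ, if_neg hj, smul_zero]

lemma lamZeroCoeff_lamZ_mul_deltaZ (i s : ℕ) :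
    lamZeroCoeff (lamZ i * deltaZ s) = if i < s then (-1) ^ i else 0 := by
  simp_rw [deltaZ, Finset.mul_sum, mul_smul_comm, lamZ_mul_lamZ, map_sum, map_zsmul,
    lamZeroCoeff_lamZ, Nat.xor_eq_zero_iff]
  simp

lemma lamZeroCoeff_deltaZ_mul_deltaZ (r s : ℕ) :
    lamZeroCoeff (deltaZ r * deltaZ s) = min r s := by
  rw [deltaZ, Finset.sum_mul, map_sum]
  simp_rw [smul_mul_assoc, map_zsmul, lamZeroCoeff_lamZ_mul_deltaZ, ← Finset.mem_range]
  have hfilter : (Finset.range r).filter (· < s) = Finset.range (min r s) := by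
    ext; simp
  simp [← pow_add, ← two_mul, pow_mul, hfilter]

def deltaCone (q : ℕ) : AddSubmonoid GammaZ := AddSubmonoid.closure (deltaZ '' Set.Icc 1 q)

lemma deltaZ_mem_deltaCone {q i : ℕ} (h1 : 1 ≤ i) (hi : i ≤ q) : deltaZ i ∈ deltaCone q :=
  AddSubmonoid.subset_closure ⟨i, ⟨h1, hi⟩, rfl⟩

lemma deltaCone_mono : Monotone deltaCone := fun _ _ hpq =>
  AddSubmonoid.closure_mono (Set.image_mono (Set.Icc_subset_Icc_right hpq))

lemma exists_eq_sum_of_mem_deltaCone {q : ℕ} {x : GammaZ} (hx : x ∈ deltaCone q) :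
    ∃ c : ℕ → ℕ, x = ∑ i ∈ Finset.Icc 1 q, (c i : ℤ) • deltaZ i := by
  induction hx using AddSubmonoid.closure_induction with
  | mem x hx =>
    obtain ⟨j, hj, rfl⟩ := hx
    refine ⟨Pi.single j 1, ?_⟩
    rw [Finset.sum_eq_single_of_mem j (by simpa using hj)]
    · simp
    · intro i _ hij
      simp [hij]
  | zero => exact ⟨0, by simp⟩
  | add x y _ _ hx hy =>
    obtain ⟨c, rfl⟩ := hx
    obtain ⟨d, rfl⟩ := hy
    exact ⟨c + d, by simp [add_smul, Finset.sum_add_distrib]⟩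

lemma neg_one_pow_smul_lamZ_two_pow_mul_add_mem_deltaCone {n : ℕ} {y : GammaZ}
    (hy : y ∈ deltaCone (2 ^ n)) :
    (-1 : ℤ) ^ 2 ^ n • (lamZ (2 ^ n) * y) + lamZeroCoeff y • deltaZ (2 ^ n)
      ∈ deltaCone (2 ^ (n + 1)) := by
  induction hy using AddSubmonoid.closure_induction with
  | mem x hx =>
    obtain ⟨i, ⟨hi1, hi⟩, rfl⟩ := hx
    rw [neg_one_pow_smul_lamZ_two_pow_mul_deltaZ hi, lamZeroCoeff_deltaZ hi1, one_smul,
      sub_add_cancel]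
    exact deltaZ_mem_deltaCone (by omega) (by rw [pow_succ]; omega)
  | zero => simp
  | add x y _ _ hx hy =>
    convert add_mem hx hy using 1
    rw [mul_add, smul_add, map_add, add_smul]
    abel

lemma deltaZ_mul_deltaZ_two_pow_add_mem_deltaCone {n r b : ℕ} (hr : r ≤ 2 ^ n) (hb : b ≤ 2 ^ n)
    (hrb : deltaZ r * deltaZ b ∈ deltaCone (2 ^ n)) :
    deltaZ r * deltaZ (2 ^ n + b) ∈ deltaCone (2 ^ (n + 1)) := by
  have hsplit : deltaZ r * deltaZ (2 ^ n + b)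
      = (r - min r b) • deltaZ (2 ^ n) + ((-1 : ℤ) ^ 2 ^ n • (lamZ (2 ^ n) * (deltaZ r * deltaZ b))
          + lamZeroCoeff (deltaZ r * deltaZ b) • deltaZ (2 ^ n)) := by
    rw [← sub_add_cancel (deltaZ (2 ^ n + b)) (deltaZ (2 ^ n)),
      ← neg_one_pow_smul_lamZ_two_pow_mul_deltaZ hb, mul_add, deltaZ_mul_deltaZ_two_pow hr,
      lamZeroCoeff_deltaZ_mul_deltaZ, mul_smul_comm, mul_left_comm, ← natCast_zsmul,
      Nat.cast_sub (min_le_left r b), Nat.cast_min, sub_smul]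
    abel
  rw [hsplit]
  exact add_mem (AddSubmonoid.nsmul_mem _
    (deltaZ_mem_deltaCone Nat.one_le_two_pow (Nat.pow_le_pow_right two_pos n.le_succ)) _)
    (neg_one_pow_smul_lamZ_two_pow_mul_add_mem_deltaCone hrb)

lemma deltaZ_mul_deltaZ_eq_deltaZ_sub_mul_deltaZ_sub {n r s : ℕ} (hr : r ≤ 2 ^ n)
    (hs : s ≤ 2 ^ n) :
    deltaZ r * deltaZ s
      = deltaZ (2 ^ n - r) * deltaZ (2 ^ n - s) + ((r : ℤ) + s - 2 ^ n) • deltaZ (2 ^ n) := by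
  set σ : GammaZ := (-1 : ℤ) ^ (2 ^ n - 1) • lamZ (2 ^ n - 1)
  have hσσ : σ * σ = 1 := by
    rw [smul_mul_smul, lamZ_mul_lamZ, Nat.xor_self, ← pow_add, ← two_mul, pow_mul, neg_one_sq,
      one_pow, one_smul]
    rfl
  have hσQ : σ * deltaZ (2 ^ n) = deltaZ (2 ^ n) := by
    rw [smul_mul_assoc]
    exact neg_one_pow_smul_lamZ_mul_deltaZ_two_pow (Nat.sub_lt (Nat.two_pow_pos n) one_pos)
  have hσr : σ * deltaZ (2 ^ n - r) = deltaZ (2 ^ n) - deltaZ r := by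
    rw [smul_mul_assoc, neg_one_pow_smul_lamZ_two_pow_sub_one_mul_deltaZ (Nat.sub_le _ _),
      Nat.sub_sub_self hr]
  have hσs : σ * deltaZ (2 ^ n - s) = deltaZ (2 ^ n) - deltaZ s := by
    rw [smul_mul_assoc, neg_one_pow_smul_lamZ_two_pow_sub_one_mul_deltaZ (Nat.sub_le _ _),
      Nat.sub_sub_self hs]
  have hrQ := deltaZ_mul_deltaZ_two_pow (Nat.sub_le (2 ^ n) r)
  have hsQ := deltaZ_mul_deltaZ_two_pow (Nat.sub_le (2 ^ n) s)
  have hQQ := deltaZ_mul_deltaZ_two_pow (le_refl (2 ^ n))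
  rw [Nat.cast_sub hr] at hrQ
  rw [Nat.cast_sub hs] at hsQ
  simp only [zsmul_eq_mul] at hrQ hsQ hQQ ⊢
  push_cast at hrQ hsQ hQQ ⊢
  linear_combination deltaZ s * hσr + (deltaZ (2 ^ n) - σ * deltaZ (2 ^ n - r)) * hσs + hQQ
    - (deltaZ (2 ^ n - r) + deltaZ (2 ^ n - s)) * hσQ - hsQ - hrQ
    + deltaZ (2 ^ n - r) * deltaZ (2 ^ n - s) * hσσ

lemma deltaZ_mul_deltaZ_mem_deltaCone_two_pow_succ {n r s : ℕ} (hrs : r ≤ s)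
    (hs : s ≤ 2 ^ (n + 1))
    (ih : ∀ {r' s' : ℕ}, r' ≤ 2 ^ n → s' ≤ 2 ^ n → deltaZ r' * deltaZ s' ∈ deltaCone (2 ^ n)) :
    deltaZ r * deltaZ s ∈ deltaCone (2 ^ (n + 1)) := by
  have hpow : 2 ^ (n + 1) = 2 ^ n + 2 ^ n := by rw [pow_succ, mul_two]
  rcases le_or_gt s (2 ^ n) with hsQ | hsQ
  · exact deltaCone_mono (by omega) (ih (hrs.trans hsQ) hsQ)
  rcases le_or_gt r (2 ^ n) with hrQ | hrQ
  · obtain ⟨b, rfl⟩ : ∃ b, s = 2 ^ n + b := ⟨s - 2 ^ n, by omega⟩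
    exact deltaZ_mul_deltaZ_two_pow_add_mem_deltaCone hrQ (by omega) (ih hrQ (by omega))
  · rw [deltaZ_mul_deltaZ_eq_deltaZ_sub_mul_deltaZ_sub (hrs.trans hs) hs,
      show (r : ℤ) + s - 2 ^ (n + 1) = ((r + s - 2 ^ (n + 1) : ℕ) : ℤ) by
        push_cast [Nat.cast_sub (show 2 ^ (n + 1) ≤ r + s by omega)]; ring,
      natCast_zsmul]
    exact add_mem (deltaCone_mono (by omega) (ih (by omega) (by omega)))
      (AddSubmonoid.nsmul_mem _ (deltaZ_mem_deltaCone Nat.one_le_two_pow le_rfl) _)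

theorem deltaZ_mul_deltaZ_mem_deltaCone (n : ℕ) {r s : ℕ} (hr : r ≤ 2 ^ n) (hs : s ≤ 2 ^ n) :
    deltaZ r * deltaZ s ∈ deltaCone (2 ^ n) := by
  induction n generalizing r s with
  | zero =>
    rcases Nat.le_one_iff_eq_zero_or_eq_one.mp hs with rfl | rfl
    · simp [deltaZ]
    · rw [← pow_zero 2, deltaZ_mul_deltaZ_two_pow hr, natCast_zsmul]
      exact AddSubmonoid.nsmul_mem _ (deltaZ_mem_deltaCone le_rfl le_rfl) _
  | succ n ih =>
    rcases le_total r s with hrs | hsr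
    · exact deltaZ_mul_deltaZ_mem_deltaCone_two_pow_succ hrs hs ih
    · rw [mul_comm]
      exact deltaZ_mul_deltaZ_mem_deltaCone_two_pow_succ hsr hr ih

theorem statement6_general (n r s : ℕ) (hrq : r ≤ 2 ^ n) (hsq : s ≤ 2 ^ n) :
    (∃ c : ℕ → ℕ, deltaZ r * deltaZ s = ∑ i ∈ Finset.Icc 1 (2 ^ n), (c i : ℤ) • deltaZ i) ∧
    deltaZ r * deltaZ (2 ^ n) = (r : ℤ) • deltaZ (2 ^ n) :=
  ⟨exists_eq_sum_of_mem_deltaCone (deltaZ_mul_deltaZ_mem_deltaCone n hrq hsq),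
    deltaZ_mul_deltaZ_two_pow hrq⟩

/-- Lemma 1.12: for `1 ≤ r, s ≤ q = 2ⁿ`, `δ_r δ_s` is a linear combination of
`δ₁, …, δ_q` with non-negative integer coefficients, and `δ_r δ_q = r·δ_q`. -/
theorem statement6 (n r s : ℕ) (hr1 : 1 ≤ r) (hrq : r ≤ 2 ^ n)
    (hs1 : 1 ≤ s) (hsq : s ≤ 2 ^ n) :
    (∃ c : ℕ → ℕ, deltaZ r * deltaZ s = ∑ i ∈ Finset.Icc 1 (2 ^ n), (c i : ℤ) • deltaZ i) ∧
    deltaZ r * deltaZ (2 ^ n) = (r : ℤ) • deltaZ (2 ^ n) :=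
  statement6_general n r s hrq hsq

end
end
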